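/- Let A be an Azumaya algebra over a commutative Noetherian k-algebra R. Then for every m ≥ 0, D^m_k(A) = D^m_k(_R A) as R-bimodules: every differential operator of order ≤ m on A as a left R-module is a differential operator of order ≤ m on A as an algebra. -/

import Mathlib

open MulOpposite

instance (priority := 900) smulCommSelf' {k A : Type*} [CommSemiring k] [Semiring A]
    [Algebra k A] : SMulCommClass A k A := SMulCommClass.symm k A A

variable (k : Type*) [Field k]
variable (A : Type*) [Ring A] [Algebra k A]
variable (L : Type*) [AddCommGroup L] [Module k L] [Module A L] [SMulCommClass A k L]

/-- Left action of `A` on `L` as a `k`-linear endomorphism. -/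
def lop (a : A) : L →ₗ[k] L where
  toFun x := a • x
  map_add' := smul_add a
  map_smul' c x := smul_comm a c x

/-- The `A`-sub-bimodule (as an additive subgroup closed under both actions)
generated by a set of operators. -/
def genBi (T : Set (L →ₗ[k] L)) : AddSubgroup (L →ₗ[k] L) :=
  AddSubgroup.closure {ψ | ∃ a b : A, ∃ t ∈ T, ψ = (lop k A L a).comp (t.comp (lop k A L b))}

/-- The Lunts–Rosenberg filtration of differential operators on the left `A`-module `L`:
`Dfil 0` is the sub-bimodule generated by the central elements of `Hom_k(L,L)`, and
`Dfil (m+1)` is the sub-bimodule generated by operators whose commutators with `A`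
lie in `Dfil m`. -/
def Dfil : ℕ → AddSubgroup (L →ₗ[k] L)
  | 0 => genBi k A L {φ | ∀ a : A, (lop k A L a).comp φ = φ.comp (lop k A L a)}
  | (m+1) => genBi k A L {φ | ∀ a : A, (lop k A L a).comp φ - φ.comp (lop k A L a) ∈ Dfil m}

/-- The ring of differential operators: union of the filtration. -/
def Ddiff : Set (L →ₗ[k] L) := ⋃ m, (Dfil k A L m : Set (L →ₗ[k] L))

open TensorProduct MulOpposite in
/-- The Azumaya condition for an `R`-algebra `A`: finitely generated, projective and
faithful as an `R`-module, `R·1` is the center of `A`, and the canonical map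
`A ⊗_R A^op → End_R(A)`, `a ⊗ b^op ↦ (c ↦ a c b)`, is bijective (here recorded as the
existence of a linear equivalence realizing this map). -/
structure IsAzumayaAlg (R A : Type*) [CommRing R] [Ring A] [Algebra R A] : Prop where
  finite : Module.Finite R A
  projective : Module.Projective R A
  faithful : FaithfulSMul R A
  center_le : ∀ a : A, (∀ b : A, a * b = b * a) → ∃ r : R, algebraMap R A r = a
  bij : ∃ e : (A ⊗[R] Aᵐᵒᵖ) ≃ₗ[R] (A →ₗ[R] A),
      ∀ (a b x : A), e (a ⊗ₜ[R] op b) x = a * x * b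

/-! ### Auxiliary lemmas -/

section AuxGeneric

variable {k : Type*} [Field k]
variable {A : Type*} [Ring A] [Algebra k A]
variable {L : Type*} [AddCommGroup L] [Module k L] [Module A L] [SMulCommClass A k L]

lemma lop_apply (a : A) (x : L) : lop k A L a x = a • x := rfl

lemma lop_one : lop k A L (1 : A) = LinearMap.id := by
  ext x; simp [lop_apply]

lemma lop_mul (a b : A) : lop k A L (a * b) = (lop k A L a).comp (lop k A L b) := by
  ext x; simp [lop_apply, mul_smul]

lemma lop_add (a b : A) : lop k A L (a + b) = lop k A L a + lop k A L b := by
  ext x; simp [lop_apply, add_smul]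

lemma mem_genBi {T : Set (L →ₗ[k] L)} {t : L →ₗ[k] L} (ht : t ∈ T) : t ∈ genBi k A L T := by
  apply AddSubgroup.subset_closure
  exact ⟨1, 1, t, ht, by simp [lop_one]⟩

lemma genBi_le {T : Set (L →ₗ[k] L)} {S : AddSubgroup (L →ₗ[k] L)}
    (h : ∀ t ∈ T, ∀ a b : A, (lop k A L a).comp (t.comp (lop k A L b)) ∈ S) :
    genBi k A L T ≤ S := by
  apply (AddSubgroup.closure_le S).mpr
  rintro ψ ⟨a, b, t, ht, rfl⟩
  exact h t ht a b

lemma comp_mem_genBi {T : Set (L →ₗ[k] L)} {ψ : L →ₗ[k] L} (hψ : ψ ∈ genBi k A L T)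
    (a b : A) : (lop k A L a).comp (ψ.comp (lop k A L b)) ∈ genBi k A L T := by
  induction hψ using AddSubgroup.closure_induction with
  | mem t ht =>
    obtain ⟨a', b', t, ht, rfl⟩ := ht
    refine AddSubgroup.subset_closure ⟨a * a', b' * b, t, ht, ?_⟩
    simp only [lop_mul, LinearMap.comp_assoc]
  | zero => simpa using zero_mem _
  | add x y hx hy hx' hy' =>
    have : (lop k A L a).comp ((x + y).comp (lop k A L b)) =
        (lop k A L a).comp (x.comp (lop k A L b)) +
          (lop k A L a).comp (y.comp (lop k A L b)) := by
      simp [LinearMap.add_comp, LinearMap.comp_add]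
    rw [this]; exact add_mem hx' hy'
  | neg x hx hx' =>
    have : (lop k A L a).comp ((-x).comp (lop k A L b)) =
        -((lop k A L a).comp (x.comp (lop k A L b))) := by
      ext v; simp [lop_apply]
    rw [this]; exact neg_mem hx'

lemma Dfil_comp_mem {m : ℕ} {ψ : L →ₗ[k] L} (hψ : ψ ∈ Dfil k A L m) (a b : A) :
    (lop k A L a).comp (ψ.comp (lop k A L b)) ∈ Dfil k A L m := by
  cases m with
  | zero => exact comp_mem_genBi hψ a b
  | succ m => exact comp_mem_genBi hψ a b

lemma Dfil_mono : ∀ m : ℕ, Dfil k A L m ≤ Dfil k A L (m + 1)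
  | 0 => by
    refine genBi_le fun t ht a b => comp_mem_genBi (mem_genBi ?_) a b
    intro a'
    rw [ht a', sub_self]
    exact zero_mem _
  | (m + 1) => by
    refine genBi_le fun t ht a b => comp_mem_genBi (mem_genBi ?_) a b
    intro a'
    exact Dfil_mono m (ht a')

end AuxGeneric

section MainAux

variable {k R A : Type*} [Field k] [CommRing R] [Algebra k R]
    [Ring A] [Algebra R A] [Algebra k A] [IsScalarTower k R A] [SMulCommClass R k A]

lemma lopR_eq (r : R) : lop k R A r = lop k A A (algebraMap R A r) := by
  ext x
  simp [lop_apply, Algebra.smul_def, smul_eq_mul]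

/-- commutator sandwich: for `c` central-acting,
`[lop c, lop a ∘ t ∘ lop b] = lop a ∘ [lop c, t] ∘ lop b`. -/
lemma commutator_sandwich {c : A} (hc : ∀ y : A, c * y = y * c) (a b : A) (t : A →ₗ[k] A) :
    (lop k A A c).comp ((lop k A A a).comp (t.comp (lop k A A b))) -
      ((lop k A A a).comp (t.comp (lop k A A b))).comp (lop k A A c) =
    (lop k A A a).comp ((((lop k A A c).comp t) - t.comp (lop k A A c)).comp (lop k A A b)) := by
  ext x
  simp only [LinearMap.sub_apply, LinearMap.comp_apply, lop_apply, smul_eq_mul]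
  have h1 : b * (c * x) = c * (b * x) := by
    rw [← mul_assoc, ← mul_assoc, hc b]
  rw [h1, mul_sub]
  congr 1
  rw [← mul_assoc, hc a, mul_assoc]

open TensorProduct in
/-- The key Azumaya decomposition lemma: if all commutators of `φ` with (images of) `R`
lie in an `A`-stable additive subgroup `D`, then modulo `D`, `φ` is a sum of terms
`lop x ∘ z` with `z` central modulo `D`. -/
lemma azumaya_decomp (hAz : IsAzumayaAlg R A) (D : AddSubgroup (A →ₗ[k] A))
    (hD : ∀ (a b : A), ∀ ψ ∈ D, (lop k A A a).comp (ψ.comp (lop k A A b)) ∈ D)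
    (φ : A →ₗ[k] A)
    (hφ : ∀ r : R, (lop k A A (algebraMap R A r)).comp φ -
      φ.comp (lop k A A (algebraMap R A r)) ∈ D) :
    ∃ (n : ℕ) (x : Fin n → A) (z : Fin n → (A →ₗ[k] A)),
      (∀ (j : Fin n) (a : A), (lop k A A a).comp (z j) - (z j).comp (lop k A A a) ∈ D) ∧
      φ - ∑ j, (lop k A A (x j)).comp (z j) ∈ D := by
  classical
  obtain ⟨e, he⟩ := hAz.bij
  have hfin := hAz.finite
  have hproj := hAz.projective
  -- dual basis for A over R
  obtain ⟨n, π, hπ⟩ := Module.Finite.exists_fin' R A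
  obtain ⟨s, hs⟩ := Module.projective_lifting_property π LinearMap.id hπ
  set xx : Fin n → A := fun j => π (Pi.single j 1) with hxx
  have hdual : ∀ y : A, ∑ j, s y j • xx j = y := by
    intro y
    have step : ∀ j : Fin n, s y j • xx j = π (Pi.single j (s y j)) := by
      intro j
      rw [hxx, ← map_smul]
      congr 1
      rw [← Pi.single_smul, smul_eq_mul, mul_one]
    calc ∑ j, s y j • xx j = π (∑ j, Pi.single j (s y j)) := by
          rw [map_sum]; exact Finset.sum_congr rfl fun j _ => step j
      _ = π (s y) := by rw [Finset.univ_sum_single]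
      _ = y := DFunLike.congr_fun hs y
  -- the quotient group
  let mk : (A →ₗ[k] A) →+ ((A →ₗ[k] A) ⧸ D) := QuotientAddGroup.mk' D
  have hmk_eq : ∀ x y : A →ₗ[k] A, mk x = mk y ↔ x - y ∈ D := fun x y =>
    QuotientAddGroup.eq_iff_sub_mem
  -- the sandwich map on the quotient
  have hsandw_add : ∀ (a b : A) (x y : A →ₗ[k] A),
      (lop k A A a).comp ((x + y).comp (lop k A A b)) =
        (lop k A A a).comp (x.comp (lop k A A b)) +
          (lop k A A a).comp (y.comp (lop k A A b)) := by
    intro a b x y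
    ext v
    simp only [LinearMap.add_apply, LinearMap.comp_apply, lop_apply, smul_add]
  let sandw : A → A → (A →ₗ[k] A) →+ (A →ₗ[k] A) := fun a b =>
    AddMonoidHom.mk' (fun ψ => (lop k A A a).comp (ψ.comp (lop k A A b)))
      (fun x y => hsandw_add a b x y)
  let Lab : A → A → ((A →ₗ[k] A) ⧸ D) →+ ((A →ₗ[k] A) ⧸ D) := fun a b =>
    QuotientAddGroup.lift D (mk.comp (sandw a b)) (by
      intro d hd
      exact (QuotientAddGroup.eq_zero_iff _).mpr (hD a b d hd))
  have hLab : ∀ (a b : A) (ψ : A →ₗ[k] A),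
      Lab a b (mk ψ) = mk ((lop k A A a).comp (ψ.comp (lop k A A b))) := fun a b ψ => rfl
  -- balanced bilinear map into the quotient
  have hadd_right : ∀ (a : A) (b b' : Aᵐᵒᵖ),
      (lop k A A a).comp (φ.comp (lop k A A (b + b').unop)) =
        (lop k A A a).comp (φ.comp (lop k A A b.unop)) +
          (lop k A A a).comp (φ.comp (lop k A A b'.unop)) := by
    intro a b b'
    ext x
    simp only [unop_add, LinearMap.add_apply, LinearMap.comp_apply, lop_apply,
      smul_eq_mul, add_mul, map_add, mul_add]
  have hadd_left : ∀ (a a' : A) (b : Aᵐᵒᵖ),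
      (lop k A A (a + a')).comp (φ.comp (lop k A A b.unop)) =
        (lop k A A a).comp (φ.comp (lop k A A b.unop)) +
          (lop k A A a').comp (φ.comp (lop k A A b.unop)) := by
    intro a a' b
    ext x
    simp only [LinearMap.add_apply, LinearMap.comp_apply, lop_apply, smul_eq_mul, add_mul]
  letI : AddCommGroup ((A →ₗ[k] A) ⧸ D) := QuotientAddGroup.Quotient.addCommGroup D
  let B : A →+ Aᵐᵒᵖ →+ ((A →ₗ[k] A) ⧸ D) := AddMonoidHom.mk'
    (fun a => AddMonoidHom.mk'
      (fun b => mk ((lop k A A a).comp (φ.comp (lop k A A b.unop))))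
      (fun b b' => by rw [← map_add]; exact congrArg mk (hadd_right a b b')))
    (fun a a' => by
      refine AddMonoidHom.ext fun b => ?_
      simp only [AddMonoidHom.mk'_apply, AddMonoidHom.add_apply]
      rw [← map_add]
      exact congrArg mk (hadd_left a a' b))
  have hB_apply : ∀ (a : A) (b : Aᵐᵒᵖ),
      B a b = mk ((lop k A A a).comp (φ.comp (lop k A A b.unop))) := fun a b => rfl
  have hbal : ∀ (r : R) (a : A) (b : Aᵐᵒᵖ), B (r • a) b = B a (r • b) := by
    intro r a b
    rw [hB_apply, hB_apply, hmk_eq]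
    have hun : (r • b).unop = r • b.unop := rfl
    rw [hun]
    have h1 : lop k A A (r • a) = (lop k A A a).comp (lop k A A (algebraMap R A r)) := by
      rw [Algebra.smul_def, Algebra.commutes, lop_mul]
    have h2 : lop k A A (r • b.unop) =
        (lop k A A (algebraMap R A r)).comp (lop k A A b.unop) := by
      rw [Algebra.smul_def, lop_mul]
    rw [h1, h2]
    have heq : ((lop k A A a).comp (lop k A A (algebraMap R A r))).comp
          (φ.comp (lop k A A b.unop)) -
        (lop k A A a).comp (φ.comp ((lop k A A (algebraMap R A r)).comp
          (lop k A A b.unop))) =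
        (lop k A A a).comp
          ((((lop k A A (algebraMap R A r)).comp φ) -
            φ.comp (lop k A A (algebraMap R A r))).comp (lop k A A b.unop)) := by
      ext x
      simp only [LinearMap.sub_apply, LinearMap.comp_apply, lop_apply, smul_eq_mul, mul_sub]
    rw [heq]
    exact hD _ _ _ (hφ r)
  -- the lifted map on the tensor product
  let Θ : (A ⊗[R] Aᵐᵒᵖ) →+ ((A →ₗ[k] A) ⧸ D) := TensorProduct.liftAddHom B hbal
  have hΘ_t : ∀ (a : A) (d : Aᵐᵒᵖ),
      Θ (a ⊗ₜ[R] d) = mk ((lop k A A a).comp (φ.comp (lop k A A d.unop))) := fun a d => rfl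
  -- compatibility of Θ with left multiplication by pure tensors
  have hΘ_mul : ∀ (a b : A) (u : A ⊗[R] Aᵐᵒᵖ),
      Θ ((a ⊗ₜ[R] op b) * u) = Lab a b (Θ u) := by
    intro a b u
    induction u with
    | zero => simp
    | tmul c d =>
      rw [Algebra.TensorProduct.tmul_mul_tmul, hΘ_t, hΘ_t, hLab]
      congr 1
      rw [unop_mul, unop_op, lop_mul, lop_mul]
      simp only [LinearMap.comp_assoc]
    | add u v hu hv =>
      rw [mul_add, map_add, map_add, hu, hv]
      rw [← map_add]
  -- e applied to general pure tensors
  have he' : ∀ (a : A) (d : Aᵐᵒᵖ) (x : A), e (a ⊗ₜ[R] d) x = a * x * d.unop := by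
    intro a d x
    have := he a d.unop x
    rwa [op_unop] at this
  -- multiplicativity of e against pure tensors
  have he_mul : ∀ (a b : A) (u : A ⊗[R] Aᵐᵒᵖ),
      e ((a ⊗ₜ[R] op b) * u) = (e (a ⊗ₜ[R] op b)).comp (e u) := by
    intro a b u
    induction u with
    | zero => simp
    | tmul c d =>
      rw [Algebra.TensorProduct.tmul_mul_tmul]
      ext x
      simp only [LinearMap.comp_apply, he', unop_mul, unop_op, mul_assoc]
    | add u v hu hv =>
      rw [mul_add, map_add, map_add, hu, hv, LinearMap.comp_add]
  -- the elements f_j and their preimages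
  let f : Fin n → (A →ₗ[R] A) := fun j =>
    LinearMap.smulRight ((LinearMap.proj j).comp s) (1 : A)
  have hf_apply : ∀ (j : Fin n) (y : A), f j y = s y j • (1 : A) := fun j y => rfl
  let u : Fin n → (A ⊗[R] Aᵐᵒᵖ) := fun j => e.symm (f j)
  have heu : ∀ j, e (u j) = f j := fun j => e.apply_symm_apply (f j)
  -- representatives of Θ (u j)
  choose z hz using fun j => QuotientAddGroup.mk'_surjective D (Θ (u j))
  have hz' : ∀ j, mk (z j) = Θ (u j) := fun j => hz j
  refine ⟨n, xx, z, ?_, ?_⟩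
  · -- centrality of the z j modulo D
    intro j a
    rw [← hmk_eq]
    have h1 : mk ((lop k A A a).comp (z j)) = Θ ((a ⊗ₜ[R] op 1) * u j) := by
      rw [hΘ_mul, ← hz' j, hLab, lop_one, LinearMap.comp_id]
    have h2 : mk ((z j).comp (lop k A A a)) = Θ (((1 : A) ⊗ₜ[R] op a) * u j) := by
      rw [hΘ_mul, ← hz' j, hLab, lop_one, LinearMap.id_comp]
    rw [h1, h2]
    have key : (a ⊗ₜ[R] op (1 : A)) * u j = ((1 : A) ⊗ₜ[R] op a) * u j := by
      apply e.injective
      rw [he_mul, he_mul, heu]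
      ext y
      simp only [LinearMap.comp_apply, he', hf_apply, unop_op, mul_one, one_mul,
        mul_smul_comm, smul_mul_assoc]
    rw [key]
  · -- the decomposition of φ modulo D
    rw [← hmk_eq]
    have hsum : ∑ j, (xx j ⊗ₜ[R] op (1 : A)) * u j = (1 : A ⊗[R] Aᵐᵒᵖ) := by
      apply e.injective
      have he1 : e (1 : A ⊗[R] Aᵐᵒᵖ) = LinearMap.id := by
        rw [Algebra.TensorProduct.one_def]
        ext x
        rw [LinearMap.id_apply, he' 1 (1 : Aᵐᵒᵖ) x, unop_one, one_mul, mul_one]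
      rw [map_sum, he1]
      ext y
      simp only [LinearMap.sum_apply, LinearMap.id_apply]
      calc ∑ j, e ((xx j ⊗ₜ[R] op 1) * u j) y
          = ∑ j, s y j • xx j := by
            refine Finset.sum_congr rfl fun j _ => ?_
            rw [he_mul, heu]
            simp only [LinearMap.comp_apply, he', hf_apply, unop_op, mul_one,
              mul_smul_comm, smul_mul_assoc]
        _ = y := hdual y
    have hfinal : mk φ = mk (∑ j, (lop k A A (xx j)).comp (z j)) := by
      have hφ1 : mk φ = Θ (1 : A ⊗[R] Aᵐᵒᵖ) := by
        rw [Algebra.TensorProduct.one_def, hΘ_t, unop_one, lop_one,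
          LinearMap.comp_id, LinearMap.id_comp]
      rw [hφ1, ← hsum, map_sum, map_sum]
      refine Finset.sum_congr rfl fun j _ => ?_
      rw [hΘ_mul, ← hz' j, hLab, lop_one, LinearMap.comp_id]
    exact hfinal
end MainAux

/-- For an Azumaya algebra `A` over a commutative Noetherian `k`-algebra `R`, for every
`m ≥ 0`, `D^m_k(A) = D^m_k(_R A)`: the differential operators of order `≤ m` on the
algebra `A` coincide with those on `A` viewed as a left `R`-module. -/
theorem Dfil_azumaya_eq_Dfil_module (k R A : Type*) [Field k] [CommRing R] [Algebra k R]
    [IsNoetherianRing R] [Ring A] [Algebra R A] [Algebra k A] [IsScalarTower k R A]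
    [SMulCommClass R k A] (hAz : IsAzumayaAlg R A) (m : ℕ) :
    (Dfil k A A m : Set (A →ₗ[k] A)) = (Dfil k R A m : Set (A →ₗ[k] A)) := by
  suffices h : Dfil k A A m = Dfil k R A m by rw [h]
  induction m with
  | zero =>
    apply le_antisymm
    · -- D^0_A ≤ D^0_R
      refine genBi_le fun t ht a b => mem_genBi ?_
      intro r
      rw [lopR_eq]
      ext x
      simp only [LinearMap.comp_apply, lop_apply, smul_eq_mul]
      have h1 : algebraMap R A r * (a * t (b * x)) = a * (algebraMap R A r * t (b * x)) := by
        rw [← mul_assoc, Algebra.commutes, mul_assoc]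
      have h2 : algebraMap R A r * t (b * x) = t (algebraMap R A r * (b * x)) := by
        have := DFunLike.congr_fun (ht (algebraMap R A r)) (b * x)
        simpa [lop_apply, smul_eq_mul] using this
      have h3 : algebraMap R A r * (b * x) = b * (algebraMap R A r * x) := by
        rw [← mul_assoc, Algebra.commutes, mul_assoc]
      rw [h1, h2, h3]
    · -- D^0_R ≤ D^0_A
      refine genBi_le fun t ht r s => ?_
      have ht' : ∀ r' : R, (lop k A A (algebraMap R A r')).comp t -
          t.comp (lop k A A (algebraMap R A r')) ∈ (⊥ : AddSubgroup (A →ₗ[k] A)) := by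
        intro r'
        rw [AddSubgroup.mem_bot, sub_eq_zero, ← lopR_eq]
        exact ht r'
      obtain ⟨n, x, z, hz, hres⟩ := azumaya_decomp hAz ⊥
        (by intro a b ψ hψ; rw [AddSubgroup.mem_bot] at hψ ⊢; simp [hψ]) t ht'
      rw [AddSubgroup.mem_bot, sub_eq_zero] at hres
      have htmem : t ∈ Dfil k A A 0 := by
        rw [hres]
        refine sum_mem fun j _ => ?_
        refine AddSubgroup.subset_closure ⟨x j, 1, z j, ?_, by rw [lop_one]; rfl⟩
        intro a
        have := hz j a
        rw [AddSubgroup.mem_bot, sub_eq_zero] at this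
        exact this
      rw [lopR_eq, lopR_eq]
      exact Dfil_comp_mem htmem _ _
  | succ m ih =>
    apply le_antisymm
    · -- D^{m+1}_A ≤ D^{m+1}_R
      refine genBi_le fun t ht a b => mem_genBi ?_
      intro r
      rw [lopR_eq, commutator_sandwich (fun y => Algebra.commutes r y) a b t]
      rw [← ih]
      exact Dfil_comp_mem (ht (algebraMap R A r)) a b
    · -- D^{m+1}_R ≤ D^{m+1}_A
      refine genBi_le fun t ht r s => ?_
      have ht' : ∀ r' : R, (lop k A A (algebraMap R A r')).comp t -
          t.comp (lop k A A (algebraMap R A r')) ∈ Dfil k A A m := by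
        intro r'
        rw [ih, ← lopR_eq]
        exact ht r'
      obtain ⟨n, x, z, hz, hres⟩ := azumaya_decomp hAz (Dfil k A A m)
        (fun a b ψ hψ => Dfil_comp_mem hψ a b) t ht'
      have htmem : t ∈ Dfil k A A (m + 1) := by
        have h1 : t = (t - ∑ j, (lop k A A (x j)).comp (z j)) +
            ∑ j, (lop k A A (x j)).comp (z j) := by abel
        rw [h1]
        refine add_mem (Dfil_mono m hres) (sum_mem fun j _ => ?_)
        exact AddSubgroup.subset_closure ⟨x j, 1, z j, hz j, by rw [lop_one]; rfl⟩
      rw [lopR_eq, lopR_eq]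
      exact Dfil_comp_mem htmem _ _
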